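/- Let Δ° = {(x₁,x₂) ∈ ℝ² : x₁ > 0, x₂ > 0, x₁ + x₂ < 1} and u_G(x₁,x₂) = (1/2)(x₁ log x₁ − x₁ + x₂ log x₂ − x₂ + (1−x₁−x₂) log(1−x₁−x₂) − (1−x₁−x₂)). There exists a smooth function f on an open neighbourhood of [0,1] with 1 + t(1−t) f''(t) > 0 for all t ∈ (0,1), such that every point (t/2, t/2) with t ∈ [1/3, 2/3] is a critical point of det Hess(u_G + (1/2) f(x₁+x₂)) in Δ°. -/

import Mathlib

open Real Set Topology Filter Matrix

/-- `i`-th partial derivative of a function on `ℝⁿ`. -/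
noncomputable def pd {n : ℕ} (i : Fin n) (f : (Fin n → ℝ) → ℝ) : (Fin n → ℝ) → ℝ :=
  fun x => fderiv ℝ f x (Pi.single i 1)

/-- Hessian matrix of a function on `ℝⁿ`. -/
noncomputable def Hess {n : ℕ} (u : (Fin n → ℝ) → ℝ) (x : Fin n → ℝ) :
    Matrix (Fin n) (Fin n) ℝ :=
  Matrix.of fun i j => pd i (pd j u) x

/-- The orbital volume function `V = (det Hess u)^(-1/2)`. -/
noncomputable def orbVol {n : ℕ} (u : (Fin n → ℝ) → ℝ) : (Fin n → ℝ) → ℝ :=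
  fun x => (Hess u x).det ^ (-(1/2 : ℝ))

/-- Guillemin symplectic potential of `ℂP²` on the standard simplex. -/
noncomputable def uGCP2 : (Fin 2 → ℝ) → ℝ := fun x =>
  (1/2) * (x 0 * Real.log (x 0) - x 0 + x 1 * Real.log (x 1) - x 1
    + (1 - x 0 - x 1) * Real.log (1 - x 0 - x 1) - (1 - x 0 - x 1))

/-- The open standard simplex in `ℝ²`. -/
def simplex2 : Set (Fin 2 → ℝ) := {x | 0 < x 0 ∧ 0 < x 1 ∧ x 0 + x 1 < 1}

/-!
With `s = x₀ + x₁`, the potential `u = u_G + f(s)/2` is of the form `∑ A(xᵢ) + C(s)`, so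
`Hess u = diag(A''(xᵢ)) + C''(s) J` with `J` the all-ones matrix, and
`det Hess u = (1 + s (1/(1-s) + f''(s))) / (4 x₀ x₁)`. Taking `f''(s) = s - 1/s - 1/(1-s)` on
`[3/10, 7/10]` makes the numerator `s²`, so near the diagonal segment
`det Hess u = (x₀ + x₁)² / (4 x₀ x₁) ≥ 1` with equality on the diagonal: every diagonal point is a
local minimum, hence a critical point. Cutting this `f''` off with a bump function `φ` supported in
`(1/4, 3/4)` and integrating twice gives a smooth `f` on `ℝ`, and
`1 + t(1-t) f''(t) = 1 - φ(t) + φ(t) t²(1-t) > 0` since `0 ≤ φ ≤ 1`.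
-/

open scoped ContDiff

theorem ContDiff.mul_of_tsupport_subset {𝕜 E : Type*} [NontriviallyNormedField 𝕜]
    [NormedAddCommGroup E] [NormedSpace 𝕜 E] {n : WithTop ℕ∞} {φ g : E → 𝕜} {U : Set E}
    (hφ : ContDiff 𝕜 n φ) (hg : ContDiffOn 𝕜 n g U) (hU : IsOpen U) (hφU : tsupport φ ⊆ U) :
    ContDiff 𝕜 n (fun x => φ x * g x) := by
  refine contDiff_iff_contDiffAt.2 fun x => ?_
  by_cases hx : x ∈ tsupport φ
  · exact hφ.contDiffAt.mul (hg.contDiffAt (hU.mem_nhds (hφU hx)))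
  · refine (contDiffAt_const (c := (0 : 𝕜))).congr_of_eventuallyEq ?_
    filter_upwards [notMem_tsupport_iff_eventuallyEq.1 hx] with y hy
    simp [hy]

theorem ContDiff.intervalIntegral_right {E : Type*} [NormedAddCommGroup E] [NormedSpace ℝ E]
    [CompleteSpace E] {h : ℝ → E} (hh : ContDiff ℝ ∞ h) (a : ℝ) :
    ContDiff ℝ ∞ (fun t => ∫ r in a..t, h r) :=
  contDiff_infty_iff_deriv.2
    ⟨fun t => (hh.continuous.integral_hasStrictDerivAt a t).hasDerivAt.differentiableAt, by
      rwa [funext (hh.continuous.deriv_integral h a)]⟩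

theorem exists_contDiff_hasDerivAt_deriv {h : ℝ → ℝ} (hh : ContDiff ℝ ∞ h) :
    ∃ f : ℝ → ℝ, ContDiff ℝ ∞ f ∧ ∀ t, HasDerivAt (deriv f) (h t) t := by
  refine ⟨fun t => ∫ s in (0 : ℝ)..t, ∫ r in (0 : ℝ)..s, h r,
    (hh.intervalIntegral_right 0).intervalIntegral_right 0, fun t => ?_⟩
  rw [funext ((hh.intervalIntegral_right 0).continuous.deriv_integral _ 0)]
  exact (hh.continuous.integral_hasStrictDerivAt 0 t).hasDerivAt

section SumPotential

variable {n : ℕ} {A A' A'' C C' C'' : ℝ → ℝ} {I J : Set ℝ}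

noncomputable def sumPotential (A C : ℝ → ℝ) : (Fin n → ℝ) → ℝ :=
  fun z => ∑ i, A (z i) + C (∑ i, z i)

theorem hasFDerivAt_sum_apply (x : Fin n → ℝ) :
    HasFDerivAt (fun z : Fin n → ℝ => ∑ i, z i)
      (∑ i, ContinuousLinearMap.proj (R := ℝ) (φ := fun _ : Fin n => ℝ) i) x :=
  HasFDerivAt.fun_sum fun i _ => hasFDerivAt_apply i x

theorem pd_sumPotential (hA : ∀ t ∈ I, HasDerivAt A (A' t) t)
    (hC : ∀ t ∈ J, HasDerivAt C (C' t) t) {x : Fin n → ℝ} (hxI : ∀ i, x i ∈ I)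
    (hxJ : ∑ i, x i ∈ J) (j : Fin n) :
    pd j (sumPotential A C) x = A' (x j) + C' (∑ i, x i) := by
  have hcoord (i : Fin n) : HasFDerivAt (fun z : Fin n → ℝ => A (z i))
      (A' (x i) • ContinuousLinearMap.proj i) x :=
    (hA _ (hxI i)).comp_hasFDerivAt x (hasFDerivAt_apply (𝕜 := ℝ) i x)
  have hu : HasFDerivAt (sumPotential A C)
      (∑ i, A' (x i) • ContinuousLinearMap.proj i + C' (∑ i, x i) • ∑ i, ContinuousLinearMap.proj i)
      x :=
    (HasFDerivAt.fun_sum (u := Finset.univ) fun i _ => hcoord i).add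
    ((hC _ hxJ).comp_hasFDerivAt x (hasFDerivAt_sum_apply x))
  rw [pd, hu.fderiv]
  simp [Pi.single_apply]

theorem hess_sumPotential (hI : IsOpen I) (hJ : IsOpen J)
    (hA : ∀ t ∈ I, HasDerivAt A (A' t) t) (hA' : ∀ t ∈ I, HasDerivAt A' (A'' t) t)
    (hC : ∀ t ∈ J, HasDerivAt C (C' t) t) (hC' : ∀ t ∈ J, HasDerivAt C' (C'' t) t)
    {y : Fin n → ℝ} (hyI : ∀ i, y i ∈ I) (hyJ : ∑ i, y i ∈ J) :
    Hess (sumPotential A C) y =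
      Matrix.diagonal (fun i => A'' (y i)) + Matrix.of fun _ _ => C'' (∑ i, y i) := by
  have hnear : ∀ᶠ z in 𝓝 y, (∀ i, z i ∈ I) ∧ ∑ i, z i ∈ J :=
    (eventually_all.2 fun i => (continuous_apply i).continuousAt.eventually_mem
      (hI.mem_nhds (hyI i))).and
    ((continuous_finsetSum _ fun i _ => continuous_apply i).continuousAt.eventually_mem
      (hJ.mem_nhds hyJ))
  ext i j
  have hpd : pd j (sumPotential A C) =ᶠ[𝓝 y] fun z => A' (z j) + C' (∑ i, z i) := by
    filter_upwards [hnear] with z hz using pd_sumPotential hA hC hz.1 hz.2 j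
  have hcoord : HasFDerivAt (fun z : Fin n → ℝ => A' (z j))
      (A'' (y j) • ContinuousLinearMap.proj j) y :=
    (hA' _ (hyI j)).comp_hasFDerivAt y (hasFDerivAt_apply (𝕜 := ℝ) j y)
  have hpd' : HasFDerivAt (fun z => A' (z j) + C' (∑ i, z i))
      (A'' (y j) • ContinuousLinearMap.proj j + C'' (∑ i, y i) • ∑ i, ContinuousLinearMap.proj i)
      y :=
    hcoord.add
    ((hC' _ hyJ).comp_hasFDerivAt y (hasFDerivAt_sum_apply y))
  simp only [Hess, Matrix.of_apply, pd]
  rw [hpd.fderiv_eq, hpd'.fderiv]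
  by_cases hij : i = j
  · subst hij; simp
  · simp [Pi.single_apply, hij, Ne.symm hij]

theorem det_hess_sumPotential_two (hI : IsOpen I) (hJ : IsOpen J)
    (hA : ∀ t ∈ I, HasDerivAt A (A' t) t) (hA' : ∀ t ∈ I, HasDerivAt A' (A'' t) t)
    (hC : ∀ t ∈ J, HasDerivAt C (C' t) t) (hC' : ∀ t ∈ J, HasDerivAt C' (C'' t) t)
    {y : Fin 2 → ℝ} (hyI : ∀ i, y i ∈ I) (hyJ : y 0 + y 1 ∈ J) :
    (Hess (sumPotential A C) y).det =
      A'' (y 0) * A'' (y 1) + C'' (y 0 + y 1) * (A'' (y 0) + A'' (y 1)) := by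
  rw [hess_sumPotential hI hJ hA hA' hC hC' hyI (by simpa using hyJ), Matrix.det_fin_two]
  simp only [Fin.sum_univ_two, Matrix.add_apply, Matrix.diagonal_apply_eq,
    Matrix.diagonal_apply_ne, Matrix.of_apply, ne_eq, zero_ne_one, one_ne_zero, not_false_eq_true, zero_add]
  ring

end SumPotential

theorem uGCP2_add_eq_sumPotential (f : ℝ → ℝ) :
    (fun z => uGCP2 z + (1/2) * f (z 0 + z 1)) =
      sumPotential (fun t => (t * log t - t) / 2)
        (fun s => ((1 - s) * log (1 - s) - (1 - s)) / 2 + f s / 2) := by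
  ext z
  simp only [uGCP2, sumPotential, Fin.sum_univ_two, sub_sub]
  ring

theorem hasDerivAt_mul_log_sub_div_two {t : ℝ} (ht : t ≠ 0) :
    HasDerivAt (fun t => (t * log t - t) / 2) (log t / 2) t := by
  simpa using ((hasDerivAt_mul_log ht).sub (hasDerivAt_id t)).div_const 2

theorem det_hess_uGCP2_add {f f' f'' : ℝ → ℝ} (hf : ∀ t ∈ Ioo (0 : ℝ) 1, HasDerivAt f (f' t) t)
    (hf' : ∀ t ∈ Ioo (0 : ℝ) 1, HasDerivAt f' (f'' t) t) {x : Fin 2 → ℝ} (hx : x ∈ simplex2) :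
    (Hess (fun z => uGCP2 z + (1/2) * f (z 0 + z 1)) x).det =
      (1 + (x 0 + x 1) * ((1 - (x 0 + x 1))⁻¹ + f'' (x 0 + x 1))) / (4 * (x 0 * x 1)) := by
  obtain ⟨hx0, hx1, hx01⟩ := hx
  have hA (t : ℝ) (ht : t ∈ Ioi 0) : HasDerivAt (fun t => (t * log t - t) / 2) (log t / 2) t :=
    hasDerivAt_mul_log_sub_div_two (ne_of_gt ht)
  have hA' (t : ℝ) (ht : t ∈ Ioi 0) : HasDerivAt (fun t => log t / 2) (t⁻¹ / 2) t :=
    (hasDerivAt_log (ne_of_gt ht)).div_const 2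
  have hC (s : ℝ) (hs : s ∈ Ioo 0 1) :
      HasDerivAt (fun s => ((1 - s) * log (1 - s) - (1 - s)) / 2 + f s / 2)
        (-(log (1 - s) / 2) + f' s / 2) s := by
    have hent : HasDerivAt (fun s => ((1 - s) * log (1 - s) - (1 - s)) / 2)
        (-(log (1 - s) / 2)) s := by
      simpa [Function.comp_def] using
        (hasDerivAt_mul_log_sub_div_two (sub_ne_zero.2 (ne_of_gt hs.2))).comp s
          ((hasDerivAt_id s).const_sub 1)
    exact hent.add ((hf s hs).div_const 2)
  have hC' (s : ℝ) (hs : s ∈ Ioo 0 1) :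
      HasDerivAt (fun s => -(log (1 - s) / 2) + f' s / 2) ((1 - s)⁻¹ / 2 + f'' s / 2) s := by
    have hlog : HasDerivAt (fun s => -(log (1 - s) / 2)) ((1 - s)⁻¹ / 2) s := by
      simpa [Function.comp_def, neg_div] using
        (((hasDerivAt_log (sub_ne_zero.2 (ne_of_gt hs.2))).comp s
          ((hasDerivAt_id s).const_sub 1)).div_const 2).fun_neg
    exact hlog.add ((hf' s hs).div_const 2)
  rw [uGCP2_add_eq_sumPotential, det_hess_sumPotential_two isOpen_Ioi isOpen_Ioo hA hA' hC hC'
    (by simp [Fin.forall_fin_two, hx0, hx1]) ⟨by linarith, hx01⟩]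
  field_simp
  ring

noncomputable def middleBump : ContDiffBump (1/2 : ℝ) := ⟨1/5, 1/4, by norm_num, by norm_num⟩

theorem middleBump_eq_one {t : ℝ} (ht : t ∈ Icc (3/10 : ℝ) (7/10)) : middleBump t = 1 :=
  middleBump.one_of_mem_closedBall <| by
    rw [Real.closedBall_eq_Icc]; norm_num [middleBump]; exact ht

noncomputable def secondDerivProfile (t : ℝ) : ℝ := middleBump t * (t - t⁻¹ - (1 - t)⁻¹)

theorem contDiff_secondDerivProfile : ContDiff ℝ ∞ secondDerivProfile := by
  refine middleBump.contDiff.mul_of_tsupport_subset (U := Ioo 0 1) ?_ isOpen_Ioo ?_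
  · refine (contDiffOn_id.sub (contDiffOn_inv ℝ |>.mono ?_)).sub
      ((contDiffOn_inv ℝ).comp (contDiffOn_const.sub contDiffOn_id) ?_)
    · exact fun t ht => ne_of_gt ht.1
    · exact fun t ht => sub_ne_zero.2 (ne_of_gt ht.2)
  · rw [middleBump.tsupport_eq, Real.closedBall_eq_Icc]
    exact Icc_subset_Ioo (by simp [middleBump]; norm_num) (by simp [middleBump]; norm_num)

theorem secondDerivProfile_eq {t : ℝ} (ht : t ∈ Icc (3/10 : ℝ) (7/10)) :
    secondDerivProfile t = t - t⁻¹ - (1 - t)⁻¹ := by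
  rw [secondDerivProfile, middleBump_eq_one ht, one_mul]

theorem one_add_mul_secondDerivProfile_pos {t : ℝ} (ht : t ∈ Ioo (0 : ℝ) 1) :
    0 < 1 + t * (1 - t) * secondDerivProfile t := by
  obtain ⟨ht0, ht1⟩ := ht
  have hφ0 : 0 ≤ middleBump t := middleBump.nonneg
  have hφ1 : middleBump t ≤ 1 := middleBump.le_one
  have hcube : 0 < t ^ 2 * (1 - t) := mul_pos (by positivity) (by linarith)
  have hexpand : 1 + t * (1 - t) * secondDerivProfile t =
      (1 - middleBump t) + middleBump t * (t ^ 2 * (1 - t)) := by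
    have : 1 - t ≠ 0 := by linarith
    rw [secondDerivProfile]; field_simp; ring
  rw [hexpand]
  rcases hφ1.lt_or_eq with hlt | hone
  · linarith [mul_nonneg hφ0 hcube.le]
  · rw [hone]; linarith

theorem det_hess_eq_of_mem_band {f : ℝ → ℝ} (hf : ∀ t ∈ Ioo (0 : ℝ) 1, HasDerivAt f (deriv f t) t)
    (hf'' : ∀ t ∈ Ioo (0 : ℝ) 1, HasDerivAt (deriv f) (secondDerivProfile t) t)
    {y : Fin 2 → ℝ} (hy : y ∈ simplex2) (hband : y 0 + y 1 ∈ Icc (3/10 : ℝ) (7/10)) :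
    (Hess (fun z => uGCP2 z + (1/2) * f (z 0 + z 1)) y).det =
      (y 0 + y 1) ^ 2 / (4 * (y 0 * y 1)) := by
  rw [det_hess_uGCP2_add hf hf'' hy, secondDerivProfile_eq hband]
  obtain ⟨hy0, hy1, hy01⟩ := hy
  have : 1 - (y 0 + y 1) ≠ 0 := by linarith
  field_simp
  ring

theorem isOpen_simplex2 : IsOpen simplex2 :=
  (isOpen_lt continuous_const (continuous_apply 0)).inter
    ((isOpen_lt continuous_const (continuous_apply 1)).inter
      (isOpen_lt ((continuous_apply 0).add (continuous_apply 1)) continuous_const))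

theorem diag_mem_simplex2 {t : ℝ} (ht : t ∈ Ioo (0 : ℝ) 1) : (![t/2, t/2] : Fin 2 → ℝ) ∈ simplex2 :=
  ⟨by simp [ht.1], by simp [ht.1], by simp [ht.2]⟩

theorem isLocalMin_det_hess_diag {f : ℝ → ℝ}
    (hf : ∀ t ∈ Ioo (0 : ℝ) 1, HasDerivAt f (deriv f t) t)
    (hf'' : ∀ t ∈ Ioo (0 : ℝ) 1, HasDerivAt (deriv f) (secondDerivProfile t) t)
    {t : ℝ} (ht : t ∈ Ioo (3/10 : ℝ) (7/10)) :
    IsLocalMin (fun y => (Hess (fun z => uGCP2 z + (1/2) * f (z 0 + z 1)) y).det)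
      ![t/2, t/2] := by
  have hsum : Continuous fun y : Fin 2 → ℝ => y 0 + y 1 := by fun_prop
  have hnear : ∀ᶠ y in 𝓝 (![t/2, t/2] : Fin 2 → ℝ),
      y ∈ simplex2 ∧ y 0 + y 1 ∈ Icc (3/10 : ℝ) (7/10) := by
    refine (isOpen_simplex2.eventually_mem
      (diag_mem_simplex2 ⟨by linarith [ht.1], by linarith [ht.2]⟩)).and
      (hsum.continuousAt.eventually_mem (Icc_mem_nhds ?_ ?_)) <;> simp <;> linarith [ht.1, ht.2]
  have hdiag : (Hess (fun z => uGCP2 z + (1/2) * f (z 0 + z 1)) ![t/2, t/2]).det = 1 := by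
    have ht0 : t ≠ 0 := by linarith [ht.1]
    rw [det_hess_eq_of_mem_band hf hf'' hnear.self_of_nhds.1 hnear.self_of_nhds.2]
    simp only [Matrix.cons_val_zero, Matrix.cons_val_one, add_halves]
    field_simp
    norm_num
  filter_upwards [hnear] with y ⟨hy, hband⟩
  have hpos : 0 < 4 * (y 0 * y 1) := by have := hy.1; have := hy.2.1; positivity
  rw [hdiag, det_hess_eq_of_mem_band hf hf'' hy hband, le_div_iff₀ hpos, one_mul, ← mul_assoc]
  exact four_mul_le_sq_add _ _

theorem stmt13 :
    ∃ (f : ℝ → ℝ) (U : Set ℝ), IsOpen U ∧ Icc (0:ℝ) 1 ⊆ U ∧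
      ContDiffOn ℝ (⊤ : ℕ∞) f U ∧
      (∀ t ∈ Ioo (0:ℝ) 1, 0 < 1 + t * (1 - t) * deriv (deriv f) t) ∧
      ∀ t ∈ Icc (1/3 : ℝ) (2/3),
        (![t/2, t/2] : Fin 2 → ℝ) ∈ simplex2 ∧
        fderiv ℝ
          (fun y => (Hess (fun z => uGCP2 z + (1/2) * f (z 0 + z 1)) y).det)
          ![t/2, t/2] = 0 := by
  obtain ⟨f, hf_smooth, hf''⟩ := exists_contDiff_hasDerivAt_deriv contDiff_secondDerivProfile
  have hf (t : ℝ) : HasDerivAt f (deriv f t) t :=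
    (hf_smooth.differentiable (by simp) t).hasDerivAt
  refine ⟨f, univ, isOpen_univ, subset_univ _, hf_smooth.contDiffOn, fun t ht => ?_,
    fun t ⟨ht1, ht2⟩ => ⟨diag_mem_simplex2 ⟨by linarith, by linarith⟩, ?_⟩⟩
  · rw [(hf'' t).deriv]
    exact one_add_mul_secondDerivProfile_pos ht
  · exact (isLocalMin_det_hess_diag (fun t _ => hf t) (fun t _ => hf'' t)
      ⟨by linarith, by linarith⟩).fderiv_eq_zero
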